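/- Let τ² = σ²_WI + (Σ_{i=1}^K n_i² / N)·σ²_AI, C = U − L, and n = max{n_1,…,n_K}. Then for any ε > 0, Prob{ u − û_{S_N} ≥ ε } ≤ exp( −N ε² / (2τ² + (2/3)·n·C·ε) ). -/

import Mathlib

/-!
Write `N (u - û) = ∑ₜ (u - f (z_{a t}, v_t))` and group the runs by instance: this is a sum of
the `K` independent blocks `Yᵢ = ∑_{a t = i} (u - f (zᵢ, v_t))`, so by Fubini its moment
generating function is the product of theirs. A block is centred, bounded above by
`nᵢ (U - L) ≤ n C`, and its second moment is `nᵢ σ²_WI + nᵢ² σ²_AI`: its seeds are independent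
but share one instance. Bernstein's bound `E e^{sY} ≤ exp (s² E Y² / (2 (1 - s b / 3)))` for
centred `Y ≤ b` gives `E e^{s N (u - û)} ≤ exp (s² N τ² / (2 (1 - s n C / 3)))`, and the Chernoff
bound at level `N ε` gives the claim.
-/

open MeasureTheory

/-- The sampling measure: `K` training instances drawn i.i.d. from `D` and
`N` random seeds drawn i.i.d. from `G`, independently of the instances. -/
noncomputable def sampleMeasure {Z V : Type*} [MeasurableSpace Z] [MeasurableSpace V]
    (D : Measure Z) (G : Measure V) (K N : ℕ) :
    Measure ((Fin K → Z) × (Fin N → V)) :=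
  (Measure.pi fun _ : Fin K => D).prod (Measure.pi fun _ : Fin N => G)

/-- True performance `u = E_{z∼D, v∼G}[f(z,v)]`. -/
noncomputable def truePerf {Z V : Type*} [MeasurableSpace Z] [MeasurableSpace V]
    (D : Measure Z) (G : Measure V) (f : Z × V → ℝ) : ℝ :=
  ∫ zv, f zv ∂(D.prod G)

/-- Within-instance mean `u_z = E_{v∼G}[f(z,v)]`. -/
noncomputable def instPerf {Z V : Type*} [MeasurableSpace V]
    (G : Measure V) (f : Z × V → ℝ) (z : Z) : ℝ :=
  ∫ v, f (z, v) ∂G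

/-- Expected within-instance variance `σ²_WI = E_{z∼D}[E_{v∼G}[(f(z,v) − u_z)²]]`. -/
noncomputable def sigma2WI {Z V : Type*} [MeasurableSpace Z] [MeasurableSpace V]
    (D : Measure Z) (G : Measure V) (f : Z × V → ℝ) : ℝ :=
  ∫ z, (∫ v, (f (z, v) - instPerf G f z) ^ 2 ∂G) ∂D

/-- Across-instance variance `σ²_AI = E_{z∼D}[(u_z − u)²]`. -/
noncomputable def sigma2AI {Z V : Type*} [MeasurableSpace Z] [MeasurableSpace V]
    (D : Measure Z) (G : Measure V) (f : Z × V → ℝ) : ℝ :=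
  ∫ z, (instPerf G f z - truePerf D G f) ^ 2 ∂D

/-- The number `n_i` of runs performed on the `i`-th training instance, for an
assignment `a : Fin N → Fin K` of each of the `N` runs to a training instance. -/
def nCount {K N : ℕ} (a : Fin N → Fin K) (i : Fin K) : ℕ :=
  (Finset.univ.filter fun t => a t = i).card

open ProbabilityTheory Real Finset

namespace Real

lemma monotone_add_two_add_sub_two_mul_exp : Monotone fun x : ℝ => x + 2 + (x - 2) * exp x := by
  refine monotone_of_hasDerivAt_nonneg (f' := fun x => 1 + (x - 1) * exp x)
    (fun x => (((hasDerivAt_id x).add_const 2).add (((hasDerivAt_id x).sub_const 2).mul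
      (hasDerivAt_exp x))).congr_deriv (by simp only [id_eq]; ring)) fun x => ?_
  -- `(1 - x) eˣ ≤ e⁻ˣ eˣ = 1`
  have h := mul_le_mul_of_nonneg_right (by linarith [add_one_le_exp (-x)] : 1 - x ≤ exp (-x))
    (exp_pos x).le
  rw [← exp_add, neg_add_cancel, exp_zero] at h
  simp only [Pi.zero_apply]
  linarith

lemma two_mul_one_sub_div_three_mul_exp_sub_le (x : ℝ) :
    2 * (1 - x / 3) * (exp x - 1 - x) ≤ x ^ 2 := by
  set H : ℝ → ℝ := fun x => x ^ 2 - 2 * (1 - x / 3) * (exp x - 1 - x)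
  have hH : ∀ x, HasDerivAt H (2 / 3 * (x + 2 + (x - 2) * exp x)) x := fun x =>
    ((hasDerivAt_pow 2 x).sub ((((hasDerivAt_id x).div_const 3).const_sub 1).const_mul 2
      |>.mul (((hasDerivAt_exp x).sub_const 1).sub (hasDerivAt_id x)))).congr_deriv
      (by simp only [Pi.sub_apply, id_eq]; ring)
  have hcont : Continuous H := continuous_iff_continuousAt.2 fun x => (hH x).continuousAt
  -- `H' = (2/3)(x + 2 + (x - 2)eˣ)` has the sign of `x`, so `H` is minimal at `0`
  suffices H 0 ≤ H x by simp [H] at this; linarith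
  rcases le_total 0 x with hx | hx
  · refine monotoneOn_of_hasDerivWithinAt_nonneg (convex_Ici 0) hcont.continuousOn
      (fun y _ => (hH y).hasDerivWithinAt) (fun y hy => ?_) Set.self_mem_Ici hx hx
    rw [interior_Ici] at hy
    have := monotone_add_two_add_sub_two_mul_exp hy.out.le
    norm_num at this
    linarith
  · refine antitoneOn_of_hasDerivWithinAt_nonpos (convex_Iic 0) hcont.continuousOn
      (fun y _ => (hH y).hasDerivWithinAt) (fun y hy => ?_) hx Set.self_mem_Iic hx
    rw [interior_Iic] at hy
    have := monotone_add_two_add_sub_two_mul_exp hy.out.le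
    norm_num at this
    linarith

lemma exp_le_one_add_add_sq_div {x c : ℝ} (hxc : x ≤ c) (hc : c < 3) :
    exp x ≤ 1 + x + x ^ 2 / (2 * (1 - c / 3)) := by
  have h : exp x - 1 - x ≤ x ^ 2 / (2 * (1 - x / 3)) := by
    rw [le_div_iff₀ (by linarith)]; linarith [two_mul_one_sub_div_three_mul_exp_sub_le x]
  have : x ^ 2 / (2 * (1 - x / 3)) ≤ x ^ 2 / (2 * (1 - c / 3)) :=
    div_le_div_of_nonneg_left (sq_nonneg x) (by linarith) (by linarith)
  linarith

end Real

namespace ProbabilityTheory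

variable {Ω : Type*} {mΩ : MeasurableSpace Ω} {μ : Measure Ω} {X : Ω → ℝ}

lemma mgf_le_exp_bernstein [IsProbabilityMeasure μ] {b s : ℝ} (hX : MemLp X 2 μ)
    (hXb : ∀ᵐ ω ∂μ, X ω ≤ b) (hX0 : μ[X] = 0) (hs : 0 ≤ s) (hsb : s * b < 3) :
    mgf X μ s ≤ exp (s ^ 2 * (∫ ω, X ω ^ 2 ∂μ) / (2 * (1 - s * b / 3))) := by
  set k := s ^ 2 / (2 * (1 - s * b / 3))
  have hX1 : Integrable (fun ω => 1 + s * X ω) μ :=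
    (integrable_const 1).add ((hX.integrable one_le_two).const_mul s)
  have hX2 : Integrable (fun ω => k * X ω ^ 2) μ := hX.integrable_sq.const_mul k
  calc mgf X μ s ≤ ∫ ω, 1 + s * X ω + k * X ω ^ 2 ∂μ := by
        refine integral_mono_ae (integrable_exp_mul_of_le s b hs hX.aemeasurable hXb)
          (hX1.add hX2) (hXb.mono fun ω h => ?_)
        have := exp_le_one_add_add_sq_div (mul_le_mul_of_nonneg_left h hs) hsb
        rwa [mul_pow, mul_div_right_comm] at this
    _ = 1 + k * ∫ ω, X ω ^ 2 ∂μ := by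
        rw [integral_add hX1 hX2, integral_add (integrable_const 1)
          ((hX.integrable one_le_two).const_mul s), integral_const_mul, integral_const_mul, hX0]
        simp
    _ ≤ _ := by
        rw [mul_div_right_comm]
        linarith [add_one_le_exp (k * ∫ ω, X ω ^ 2 ∂μ)]

lemma measureReal_ge_le_exp_bernstein [IsProbabilityMeasure μ] {v b t : ℝ} (hb : 0 ≤ b)
    (ht : 0 ≤ t) (h_int : ∀ s, 0 ≤ s → Integrable (fun ω => exp (s * X ω)) μ)
    (h_mgf : ∀ s, 0 ≤ s → s * b < 3 →
      mgf X μ s ≤ exp (s ^ 2 * v / (2 * (1 - s * b / 3)))) :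
    μ.real {ω | t ≤ X ω} ≤ exp (-t ^ 2 / (2 * (v + b * t / 3))) := by
  set d := v + b * t / 3
  rcases le_or_gt d 0 with hd | hd
  · exact measureReal_le_one.trans (one_le_exp (div_nonneg_of_nonpos (by nlinarith) (by linarith)))
  -- `s = t / (v + 2bt/3)` makes the Chernoff exponent exactly `-t²/(2d)`
  set e := d + b * t / 3
  have he : 0 < e := by positivity
  set s := t / e
  have hs : 0 ≤ s := div_nonneg ht he.le
  have hsb : s * b < 3 := by
    rw [div_mul_eq_mul_div, div_lt_iff₀ he]
    linarith [show 3 * e = 3 * d + t * b by simp only [e]; ring]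
  calc μ.real {ω | t ≤ X ω} ≤ exp (-s * t) * mgf X μ s :=
        measure_ge_le_exp_mul_mgf t hs (h_int s hs)
    _ ≤ exp (-s * t) * exp (s ^ 2 * v / (2 * (1 - s * b / 3))) := by gcongr; exact h_mgf s hs hsb
    _ = exp (-t ^ 2 / (2 * d)) := by
        have h1 : 1 - s * b / 3 = d / e := by
          simp only [s, e]; field_simp; ring
        rw [← exp_add, h1]
        congr 1
        simp only [s]
        field_simp
        simp only [e, d]
        ring

lemma integral_sum_pi [IsProbabilityMeasure μ] (hX : Integrable X μ) (m : ℕ) :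
    ∫ w, ∑ j, X (w j) ∂(.pi fun _ : Fin m => μ) = m * μ[X] := by
  rw [integral_finsetSum _ fun j _ => integrable_comp_eval hX]
  simp [integral_comp_eval (μ := fun _ : Fin m => μ) hX.aestronglyMeasurable]

lemma integral_sum_sq_pi [IsProbabilityMeasure μ] (hX : MemLp X 2 μ) (m : ℕ) :
    ∫ w, (∑ j, X (w j)) ^ 2 ∂(.pi fun _ : Fin m => μ)
      = m * Var[X; μ] + (m * μ[X]) ^ 2 := by
  have hS : MemLp (fun w : Fin m → Ω => ∑ j, X (w j)) 2 (.pi fun _ => μ) :=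
    memLp_finsetSum _ fun j _ => hX.comp_measurePreserving (measurePreserving_eval _ j)
  have hvar : Var[fun w : Fin m → Ω => ∑ j, X (w j); .pi fun _ => μ] = m * Var[X; μ] := by
    simpa [Finset.sum_fn] using variance_sum_pi (μ := fun _ : Fin m => μ) fun _ => hX
  rw [variance_eq_sub hS, integral_sum_pi (hX.integrable one_le_two)] at hvar
  simp only [Pi.pow_apply] at hvar
  linarith

end ProbabilityTheory

lemma sum_nCount {K N : ℕ} (a : Fin N → Fin K) : ∑ i, nCount a i = N := by
  simpa [nCount] using (card_eq_sum_card_fiberwise (s := univ) fun t _ => mem_univ (a t)).symm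

lemma prod_comp_eq_prod_pow_nCount {M : Type*} [CommMonoid M] {K N : ℕ} (a : Fin N → Fin K)
    (φ : Fin K → M) : ∏ t, φ (a t) = ∏ i, φ i ^ nCount a i := by
  rw [← prod_fiberwise' univ a φ]
  simp [nCount]

lemma le_sub_one_div_mul_sum_iff {N : ℕ} (hN : 0 < N) (u ε : ℝ) (y : Fin N → ℝ) :
    ε ≤ u - 1 / N * ∑ t, y t ↔ N * ε ≤ ∑ t, (u - y t) := by
  have hN' : (0 : ℝ) < N := by exact_mod_cast hN
  rw [sum_sub_distrib, sum_const, card_univ, Fintype.card_fin, nsmul_eq_mul,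
    ← mul_le_mul_iff_of_pos_left hN', mul_sub, ← mul_assoc, mul_one_div_cancel hN'.ne', one_mul]

lemma abs_sum_le_mul {m : ℕ} {f : Fin m → ℝ} {c : ℝ} (h : ∀ j, |f j| ≤ c) :
    |∑ j, f j| ≤ m * c :=
  (abs_sum_le_sum_abs _ _).trans ((sum_le_card_nsmul _ _ _ fun j _ => h j).trans_eq (by simp))

lemma abs_instPerf_le {Z V : Type*} [MeasurableSpace V] {G : Measure V} [IsProbabilityMeasure G]
    {g : Z × V → ℝ} {c : ℝ} (hgc : ∀ x, |g x| ≤ c) (z : Z) : |instPerf G g z| ≤ c := by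
  simpa [instPerf] using norm_integral_le_of_norm_le_const (μ := G) (f := fun v => g (z, v))
    (ae_of_all _ fun v => (Real.norm_eq_abs _).trans_le (hgc (z, v)))

section Sampling

variable {Z V : Type*} [MeasurableSpace Z] [MeasurableSpace V] {D : Measure Z} {G : Measure V}
  [IsProbabilityMeasure D] [IsProbabilityMeasure G] {g : Z × V → ℝ} {c : ℝ}

lemma integral_prod_pi_prod_eq (hg : Measurable g) (hgc : ∀ x, |g x| ≤ c) (m : ℕ) :
    ∫ ω, ∏ j, g (ω.1, ω.2 j) ∂D.prod (.pi fun _ : Fin m => G)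
      = ∫ z, (∫ v, g (z, v) ∂G) ^ m ∂D := by
  rw [integral_prod]
  · refine integral_congr_ae (ae_of_all _ fun z => ?_)
    simpa using integral_fintype_prod_eq_pow (ι := Fin m) (fun v => g (z, v))
  · refine .of_bound (measurable_prod _ fun j _ => hg.comp (by fun_prop)).aestronglyMeasurable
      (c ^ m) (ae_of_all _ fun ω => ?_)
    rw [Real.norm_eq_abs, abs_prod]
    exact (prod_le_prod (fun _ _ => abs_nonneg _) fun _ _ => hgc _).trans_eq (by simp)

lemma integral_sampleMeasure_prod_eq (hg : Measurable g) (hgc : ∀ x, |g x| ≤ c) {K N : ℕ}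
    (a : Fin N → Fin K) :
    ∫ ω, ∏ t, g (ω.1 (a t), ω.2 t) ∂sampleMeasure D G K N
      = ∏ i, ∫ z, (∫ v, g (z, v) ∂G) ^ nCount a i ∂D := by
  rw [sampleMeasure, integral_prod]
  · rw [← integral_fintype_prod_eq_prod (fun i z => (∫ v, g (z, v) ∂G) ^ nCount a i)]
    refine integral_congr_ae (ae_of_all _ fun zs => ?_)
    dsimp only
    rw [← prod_comp_eq_prod_pow_nCount a (fun i => ∫ v, g (zs i, v) ∂G)]
    exact integral_fintype_prod_eq_prod (fun t v => g (zs (a t), v))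
  · refine .of_bound (measurable_prod _ fun j _ => hg.comp (by fun_prop)).aestronglyMeasurable
      (c ^ N) (ae_of_all _ fun ω => ?_)
    rw [Real.norm_eq_abs, abs_prod]
    exact (prod_le_prod (fun _ _ => abs_nonneg _) fun _ _ => hgc _).trans_eq (by simp)

lemma mgf_sampleMeasure_sum_eq_prod (hg : Measurable g) (hgc : ∀ x, |g x| ≤ c) {K N : ℕ}
    (a : Fin N → Fin K) (s : ℝ) :
    mgf (fun ω => ∑ t, g (ω.1 (a t), ω.2 t)) (sampleMeasure D G K N) s
      = ∏ i, mgf (fun ω => ∑ j, g (ω.1, ω.2 j))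
          (D.prod (.pi fun _ : Fin (nCount a i) => G)) s := by
  have hexp : Measurable fun x => exp (s * g x) := by fun_prop
  have hexpc : ∀ x, |exp (s * g x)| ≤ exp (|s| * c) := fun x => by
    rw [abs_exp, exp_le_exp]
    calc s * g x ≤ |s * g x| := le_abs_self _
      _ ≤ |s| * c := by rw [abs_mul]; exact mul_le_mul_of_nonneg_left (hgc x) (abs_nonneg s)
  simp only [mgf, mul_sum, exp_sum]
  rw [integral_sampleMeasure_prod_eq hexp hexpc]
  simp_rw [integral_prod_pi_prod_eq hexp hexpc]

lemma integral_prod_pi_sum (hg : Measurable g) (hgc : ∀ x, |g x| ≤ c) (m : ℕ) :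
    ∫ ω, ∑ j, g (ω.1, ω.2 j) ∂D.prod (.pi fun _ : Fin m => G) = m * truePerf D G g := by
  have hslice : ∀ z, Integrable (fun v => g (z, v)) G := fun z =>
    .of_bound (hg.comp measurable_prodMk_left).aestronglyMeasurable c (ae_of_all _ fun _ => hgc _)
  rw [integral_prod, truePerf, integral_prod _ (.of_bound hg.aestronglyMeasurable c
    (ae_of_all _ hgc)), ← integral_const_mul]
  · refine integral_congr_ae (ae_of_all _ fun z => ?_)
    exact integral_sum_pi (hslice z) m
  · exact .of_bound (measurable_sum _ fun j _ => hg.comp (by fun_prop)).aestronglyMeasurable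
      (m * c) (ae_of_all _ fun ω => abs_sum_le_mul fun j => hgc _)

lemma integral_prod_pi_sum_sq (hg : Measurable g) (hgc : ∀ x, |g x| ≤ c) (m : ℕ) :
    ∫ ω, (∑ j, g (ω.1, ω.2 j)) ^ 2 ∂D.prod (.pi fun _ : Fin m => G)
      = m * sigma2WI D G g + m ^ 2 * ∫ z, instPerf G g z ^ 2 ∂D := by
  have hslice : ∀ z, MemLp (fun v => g (z, v)) 2 G := fun z =>
    .of_bound (hg.comp measurable_prodMk_left).aestronglyMeasurable c (ae_of_all _ fun _ => hgc _)
  have hinst : Measurable (instPerf G g) := hg.stronglyMeasurable.integral_prod_right'.measurable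
  have habs_sq {x d : ℝ} (h : |x| ≤ d) : ‖x ^ 2‖ ≤ d ^ 2 := by
    rw [Real.norm_eq_abs, abs_pow]; exact pow_le_pow_left₀ (abs_nonneg x) h 2
  rw [integral_prod]
  · calc _ = ∫ z, (m * ∫ v, (g (z, v) - instPerf G g z) ^ 2 ∂G
            + m ^ 2 * instPerf G g z ^ 2) ∂D :=
          integral_congr_ae (ae_of_all _ fun z => by
            simp only
            rw [integral_sum_sq_pi (hslice z), variance_eq_integral (hslice z).aemeasurable,
              instPerf]
            ring)
      _ = _ := by
          rw [integral_add, integral_const_mul, integral_const_mul, sigma2WI]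
          · refine (Integrable.integral_prod_left
              (f := fun x : Z × V => (g x - instPerf G g x.1) ^ 2) ?_).const_mul _
            refine .of_bound (by fun_prop) ((c + c) ^ 2) (ae_of_all _ fun x => habs_sq ?_)
            exact (abs_sub _ _).trans (add_le_add (hgc x) (abs_instPerf_le hgc x.1))
          · exact (Integrable.of_bound (by fun_prop) (c ^ 2)
              (ae_of_all _ fun z => habs_sq (abs_instPerf_le hgc z))).const_mul _
  · refine .of_bound ((measurable_sum _ fun j _ => hg.comp (by fun_prop)).pow_const 2
      ).aestronglyMeasurable ((m * c) ^ 2) (ae_of_all _ fun ω => habs_sq ?_)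
    exact abs_sum_le_mul fun j => hgc _

lemma truePerf_const_sub (hg : Integrable g (D.prod G)) (a : ℝ) :
    truePerf D G (fun x => a - g x) = a - truePerf D G g := by
  simp [truePerf, integral_sub (integrable_const a) hg]

omit [MeasurableSpace Z] [IsProbabilityMeasure D] in
lemma instPerf_const_sub {z : Z} (hg : Integrable (fun v => g (z, v)) G) (a : ℝ) :
    instPerf G (fun x => a - g x) z = a - instPerf G g z := by
  simp [instPerf, integral_sub (integrable_const a) hg]

omit [IsProbabilityMeasure D] in
lemma sigma2WI_const_sub (hg : ∀ z, Integrable (fun v => g (z, v)) G) (a : ℝ) :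
    sigma2WI D G (fun x => a - g x) = sigma2WI D G g := by
  simp only [sigma2WI, instPerf_const_sub (hg _)]
  congr with z
  congr with v
  ring

omit [IsProbabilityMeasure D] in
lemma integral_sq_instPerf_truePerf_sub (hg : ∀ z, Integrable (fun v => g (z, v)) G) :
    ∫ z, instPerf G (fun x => truePerf D G g - g x) z ^ 2 ∂D = sigma2AI D G g := by
  simp only [sigma2AI, instPerf_const_sub (hg _)]
  congr with z
  ring

end Sampling

instance {Z V : Type*} [MeasurableSpace Z] [MeasurableSpace V] (D : Measure Z) (G : Measure V)
    [IsProbabilityMeasure D] [IsProbabilityMeasure G] (K N : ℕ) :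
    IsProbabilityMeasure (sampleMeasure D G K N) := by
  unfold sampleMeasure; infer_instance

section Estimator

variable {Z V : Type*} [MeasurableSpace Z] [MeasurableSpace V] {D : Measure Z} {G : Measure V}
  [IsProbabilityMeasure D] [IsProbabilityMeasure G] {f : Z × V → ℝ} {L U : ℝ}

lemma truePerf_mem_Icc (hf : Measurable f) (hbdd : ∀ x, f x ∈ Set.Icc L U) :
    truePerf D G f ∈ Set.Icc L U := by
  have hint : Integrable f (D.prod G) := .of_mem_Icc L U hf.aemeasurable (ae_of_all _ hbdd)
  constructor
  · simpa [truePerf] using integral_mono (integrable_const L) hint fun x => (hbdd x).1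
  · simpa [truePerf] using integral_mono hint (integrable_const U) fun x => (hbdd x).2

lemma abs_truePerf_sub_le (hf : Measurable f) (hbdd : ∀ x, f x ∈ Set.Icc L U) (x : Z × V) :
    |truePerf D G f - f x| ≤ U - L := by
  have hu := truePerf_mem_Icc (D := D) (G := G) hf hbdd
  rw [abs_le]
  constructor <;> linarith [hu.1, hu.2, (hbdd x).1, (hbdd x).2]

lemma mgf_prod_pi_sum_truePerf_sub_le (hf : Measurable f) (hbdd : ∀ x, f x ∈ Set.Icc L U)
    (m : ℕ) {b s : ℝ} (hb : m * (U - L) ≤ b) (hs : 0 ≤ s) (hsb : s * b < 3) :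
    mgf (fun ω => ∑ j, (truePerf D G f - f (ω.1, ω.2 j))) (D.prod (.pi fun _ : Fin m => G)) s
      ≤ exp (s ^ 2 * (m * sigma2WI D G f + m ^ 2 * sigma2AI D G f) / (2 * (1 - s * b / 3))) := by
  have hh : Measurable fun x => truePerf D G f - f x := measurable_const.sub hf
  have hhc := abs_truePerf_sub_le (D := D) (G := G) hf hbdd
  have hslice : ∀ z, Integrable (fun v => f (z, v)) G := fun z =>
    .of_mem_Icc L U (hf.comp measurable_prodMk_left).aemeasurable (ae_of_all _ fun _ => hbdd _)
  have hY : ∀ ω : Z × (Fin m → V),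
      |∑ j, (truePerf D G f - f (ω.1, ω.2 j))| ≤ m * (U - L) :=
    fun ω => abs_sum_le_mul fun j => hhc _
  refine (mgf_le_exp_bernstein (μ := D.prod (.pi fun _ : Fin m => G))
    (X := fun ω => ∑ j, (truePerf D G f - f (ω.1, ω.2 j)))
    (.of_bound (measurable_sum _ fun j _ => hh.comp (by fun_prop)
    ).aestronglyMeasurable _ (ae_of_all _ hY))
    (ae_of_all _ fun ω => ((le_abs_self _).trans (hY ω)).trans hb) ?_ hs hsb).trans_eq ?_
  · rw [integral_prod_pi_sum hh hhc, truePerf_const_sub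
      (.of_mem_Icc L U hf.aemeasurable (ae_of_all _ hbdd)), sub_self, mul_zero]
  · rw [integral_prod_pi_sum_sq hh hhc, sigma2WI_const_sub hslice,
      integral_sq_instPerf_truePerf_sub hslice]

lemma mgf_sampleMeasure_sum_truePerf_sub_le (hf : Measurable f)
    (hbdd : ∀ x, f x ∈ Set.Icc L U) {K N : ℕ} (a : Fin N → Fin K) {b s : ℝ}
    (hb : ∀ i, nCount a i * (U - L) ≤ b) (hs : 0 ≤ s) (hsb : s * b < 3) :
    mgf (fun ω => ∑ t, (truePerf D G f - f (ω.1 (a t), ω.2 t))) (sampleMeasure D G K N) s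
      ≤ exp (s ^ 2 * (N * sigma2WI D G f + (∑ i, (nCount a i : ℝ) ^ 2) * sigma2AI D G f)
          / (2 * (1 - s * b / 3))) := by
  have hh : Measurable fun x => truePerf D G f - f x := measurable_const.sub hf
  rw [mgf_sampleMeasure_sum_eq_prod hh (abs_truePerf_sub_le hf hbdd)]
  calc _ ≤ ∏ i, exp (s ^ 2 * (nCount a i * sigma2WI D G f + nCount a i ^ 2 * sigma2AI D G f)
          / (2 * (1 - s * b / 3))) :=
        prod_le_prod (fun i _ => mgf_nonneg) fun i _ =>
          mgf_prod_pi_sum_truePerf_sub_le hf hbdd _ (hb i) hs hsb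
    _ = _ := by
        rw [← exp_sum, ← sum_div, ← mul_sum, sum_add_distrib, ← sum_mul, ← sum_mul,
          ← Nat.cast_sum, sum_nCount]

end Estimator

/-- **Bernstein-type concentration for the performance estimator.**
Let `τ² = σ²_WI + (Σ_i n_i² / N)·σ²_AI`, `C = U − L` and `n = max_i n_i`.
Then for any `ε > 0`,
`Prob{u − û_{S_N} ≥ ε} ≤ exp(−N ε² / (2τ² + (2/3)·n·C·ε))`. -/
theorem estimator_concentration
    {Z V : Type*} [MeasurableSpace Z] [MeasurableSpace V]
    (D : Measure Z) (G : Measure V)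
    [IsProbabilityMeasure D] [IsProbabilityMeasure G]
    (L U : ℝ) (hLU : L ≤ U)
    (f : Z × V → ℝ) (hf : Measurable f)
    (hbdd : ∀ z v, f (z, v) ∈ Set.Icc L U)
    (K N : ℕ) (hN : 1 ≤ N)
    (a : Fin N → Fin K)
    (ε : ℝ) (hε : 0 < ε) :
    (sampleMeasure D G K N
        {ω : (Fin K → Z) × (Fin N → V) |
          ε ≤ truePerf D G f - (1 / (N : ℝ)) * ∑ t : Fin N, f (ω.1 (a t), ω.2 t)}).toReal
    ≤ Real.exp (-((N : ℝ) * ε ^ 2) /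
        (2 * (sigma2WI D G f
              + ((∑ i : Fin K, (nCount a i : ℝ) ^ 2) / (N : ℝ)) * sigma2AI D G f)
          + 2 * ((Finset.univ.sup (nCount a) : ℕ) : ℝ) * (U - L) * ε / 3)) := by
  have hbdd' : ∀ x, f x ∈ Set.Icc L U := fun x => hbdd x.1 x.2
  have hC : 0 ≤ U - L := sub_nonneg.2 hLU
  set X := fun ω : (Fin K → Z) × (Fin N → V) =>
    ∑ t, (truePerf D G f - f (ω.1 (a t), ω.2 t))
  have hX : Measurable X := measurable_sum _ fun t _ => measurable_const.sub (hf.comp (by fun_prop))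
  have hXle : ∀ ω, X ω ≤ N * (U - L) := fun ω =>
    (sum_le_card_nsmul _ _ _ fun t _ => (le_abs_self _).trans
      (abs_truePerf_sub_le hf hbdd' _)).trans_eq (by simp)
  have hb : ∀ i, (nCount a i : ℝ) * (U - L) ≤ (univ.sup (nCount a) : ℕ) * (U - L) :=
    fun i => mul_le_mul_of_nonneg_right (Nat.cast_le.2 (le_sup (mem_univ i))) hC
  simp_rw [le_sub_one_div_mul_sum_iff hN]
  refine (measureReal_ge_le_exp_bernstein (mul_nonneg (Nat.cast_nonneg _) hC) (by positivity)
    (fun s hs => integrable_exp_mul_of_le s _ hs hX.aemeasurable (ae_of_all _ hXle))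
    (fun s hs hsb => mgf_sampleMeasure_sum_truePerf_sub_le hf hbdd' a hb hs hsb)).trans_eq ?_
  congr 1
  field_simp
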